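/- Rate-distortion converse with two-sided side information: if a rate-K/N joint source-channel code over a discrete memoryless channel with capacity C achieves expected per-symbol distortion at most D for an i.i.d. source (U_i, S_i) with side information S available at encoder and decoder, then K · R_SI(D) ≤ N · C, where R_SI(D) = min over conditional distributions p(v|u,s) with E[d(U,V)] ≤ D of I(U; V | S). -/
import Mathlib
set_option maxHeartbeats 1600000
set_option linter.unusedSectionVars false


open Finset Real

/-- Probability of an event under a pmf `p` on a finite sample space. -/
noncomputable def pr {Ω : Type*} [Fintype Ω] (p : Ω → ℝ) (E : Ω → Prop) [DecidablePred E] : ℝ :=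
  ∑ ω, if E ω then p ω else 0

/-- Conditional mutual information `I(X;Y|Z)` (in bits) of finite-valued random variables. -/
noncomputable def condMI {Ω α β γ : Type*} [Fintype Ω] [Fintype α] [Fintype β] [Fintype γ]
    [DecidableEq α] [DecidableEq β] [DecidableEq γ]
    (p : Ω → ℝ) (X : Ω → α) (Y : Ω → β) (Z : Ω → γ) : ℝ :=
  ∑ x : α, ∑ y : β, ∑ z : γ,
    pr p (fun ω => X ω = x ∧ Y ω = y ∧ Z ω = z) *
      Real.logb 2 ((pr p (fun ω => X ω = x ∧ Y ω = y ∧ Z ω = z) * pr p (fun ω => Z ω = z)) /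
        (pr p (fun ω => X ω = x ∧ Z ω = z) * pr p (fun ω => Y ω = y ∧ Z ω = z)))

/-- Mutual information `I(X;Y)` (in bits). -/
noncomputable def mi {Ω α β : Type*} [Fintype Ω] [Fintype α] [Fintype β]
    [DecidableEq α] [DecidableEq β] (p : Ω → ℝ) (X : Ω → α) (Y : Ω → β) : ℝ :=
  condMI p X Y (fun _ => (0 : Fin 1))


open Finset Real

section PRutil

variable {Ω : Type*} [Fintype Ω] (p : Ω → ℝ)

theorem pr_nonneg (hp : ∀ ω, 0 ≤ p ω) (E : Ω → Prop) [DecidablePred E] : 0 ≤ pr p E := by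
  unfold pr
  apply Finset.sum_nonneg
  intro ω _
  split <;> simp [hp ω]

theorem pr_congr {E F : Ω → Prop} [DecidablePred E] [DecidablePred F]
    (h : ∀ ω, E ω ↔ F ω) : pr p E = pr p F := by
  unfold pr
  exact Finset.sum_congr rfl fun ω _ => if_congr (h ω) rfl rfl

theorem pr_mono (hp : ∀ ω, 0 ≤ p ω) {E F : Ω → Prop} [DecidablePred E] [DecidablePred F]
    (h : ∀ ω, E ω → F ω) : pr p E ≤ pr p F := by
  unfold pr
  apply Finset.sum_le_sum
  intro ω _
  by_cases hE : E ω
  · simp [hE, h ω hE]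
  · simp only [hE, if_false]
    split <;> simp [hp ω]

theorem pr_partition {α : Type*} [Fintype α] [DecidableEq α] (X : Ω → α)
    (E : Ω → Prop) [DecidablePred E] :
    pr p E = ∑ a : α, pr p (fun ω => E ω ∧ X ω = a) := by
  unfold pr
  rw [Finset.sum_comm]
  apply Finset.sum_congr rfl
  intro ω _
  by_cases hE : E ω <;> simp [hE]

theorem pr_determined {E A : Ω → Prop} [DecidablePred E] [DecidablePred A]
    {c : Prop} [Decidable c]
    (h : ∀ ω, A ω → (E ω ↔ c)) : pr p (fun ω => E ω ∧ A ω) = if c then pr p A else 0 := by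
  by_cases hc : c
  · simp only [hc, if_true]
    apply pr_congr
    intro ω
    constructor
    · exact fun hEA => hEA.2
    · intro hA; exact ⟨(h ω hA).2 hc, hA⟩
  · simp only [hc, if_false]
    unfold pr
    apply Finset.sum_eq_zero
    intro ω _
    rw [if_neg]
    rintro ⟨hE, hA⟩
    exact hc ((h ω hA).1 hE)

end PRutil

section Gibbs

theorem logsum {ι : Type*} [Fintype ι] (a b : ι → ℝ)
    (ha : ∀ i, 0 ≤ a i) (hb : ∀ i, 0 ≤ b i) (hab : ∀ i, b i = 0 → a i = 0) :
    (∑ i, a i) * Real.logb 2 ((∑ i, a i) / (∑ i, b i)) ≤ ∑ i, a i * Real.logb 2 (a i / b i) := by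
  set A := ∑ i, a i with hA
  set B := ∑ i, b i with hB
  by_cases hA0 : A = 0
  · have h0 : ∀ i, a i = 0 := fun i =>
      (Finset.sum_eq_zero_iff_of_nonneg (fun i _ => ha i)).1 hA0 i (Finset.mem_univ i)
    simp [hA0, h0]
  · have hApos : 0 < A := lt_of_le_of_ne (Finset.sum_nonneg fun i _ => ha i) (Ne.symm hA0)
    have hBpos : 0 < B := by
      rcases lt_or_eq_of_le (Finset.sum_nonneg fun i _ => hb i) with h | h
      · exact h
      · exfalso
        have hb0 : ∀ i, b i = 0 :=
          fun i => (Finset.sum_eq_zero_iff_of_nonneg (fun i _ => hb i)).1 h.symm i (Finset.mem_univ i)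
        have : A = 0 := Finset.sum_eq_zero fun i _ => hab i (hb0 i)
        exact hA0 this
    -- termwise bound
    have key : ∀ i, a i * Real.logb 2 (A / B) + (a i - b i * (A / B)) / Real.log 2
        ≤ a i * Real.logb 2 (a i / b i) := by
      intro i
      by_cases hai : a i = 0
      · have : (0 - b i * (A / B)) / Real.log 2 ≤ 0 := by
          apply div_nonpos_of_nonpos_of_nonneg
          · simp only [zero_sub, neg_nonpos]
            exact mul_nonneg (hb i) (le_of_lt (div_pos hApos hBpos))
          · exact le_of_lt (Real.log_pos one_lt_two)
        rw [hai]
        simpa using this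
      · have haipos : 0 < a i := lt_of_le_of_ne (ha i) (Ne.symm hai)
        have hbipos : 0 < b i := by
          rcases lt_or_eq_of_le (hb i) with h | h
          · exact h
          · exact absurd (hab i h.symm) hai
        have hlog2 : 0 < Real.log 2 := Real.log_pos one_lt_two
        -- logb 2 (a/b) - logb 2 (A/B) = logb 2 (a*B/(b*A)) ≥ (1 - b*A/(a*B))/log 2
        have hx : (0:ℝ) < b i * A / (a i * B) := by positivity
        have h1 : Real.log (b i * A / (a i * B)) ≤ b i * A / (a i * B) - 1 :=
          Real.log_le_sub_one_of_pos hx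
        have h2 : Real.log (a i / b i) - Real.log (A / B) = - Real.log (b i * A / (a i * B)) := by
          rw [Real.log_div (ne_of_gt haipos) (ne_of_gt hbipos),
            Real.log_div (ne_of_gt hApos) (ne_of_gt hBpos),
            Real.log_div (by positivity) (by positivity),
            Real.log_mul (ne_of_gt hbipos) (ne_of_gt hApos),
            Real.log_mul (ne_of_gt haipos) (ne_of_gt hBpos)]
          ring
      -- now convert to logb
        have h3 : Real.logb 2 (a i / b i) - Real.logb 2 (A / B)
            = - Real.log (b i * A / (a i * B)) / Real.log 2 := by
          unfold Real.logb
          rw [← h2]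
          ring
        have h4 : - Real.log (b i * A / (a i * B)) ≥ 1 - b i * A / (a i * B) := by linarith
        have h5 : a i * (Real.logb 2 (a i / b i) - Real.logb 2 (A / B))
            ≥ a i * ((1 - b i * A / (a i * B)) / Real.log 2) := by
          rw [h3]
          apply mul_le_mul_of_nonneg_left _ (le_of_lt haipos)
          exact div_le_div_of_nonneg_right h4 hlog2.le
        have h6 : a i * ((1 - b i * A / (a i * B)) / Real.log 2)
            = (a i - b i * (A / B)) / Real.log 2 := by
          field_simp
        nlinarith [h5, h6]
    calc A * Real.logb 2 (A / B)
        = ∑ i, (a i * Real.logb 2 (A / B) + (a i - b i * (A / B)) / Real.log 2) := by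
          rw [Finset.sum_add_distrib, ← Finset.sum_mul, ← hA]
          have : ∑ i, (a i - b i * (A / B)) / Real.log 2
              = (A - B * (A / B)) / Real.log 2 := by
            rw [← Finset.sum_div, Finset.sum_sub_distrib, ← Finset.sum_mul, ← hA, ← hB]
          rw [this]
          rw [mul_div_cancel₀ _ (ne_of_gt hBpos)]
          simp
      _ ≤ ∑ i, a i * Real.logb 2 (a i / b i) := Finset.sum_le_sum fun i _ => key i

theorem gibbs {ι : Type*} [Fintype ι] (a b : ι → ℝ)
    (ha : ∀ i, 0 ≤ a i) (hb : ∀ i, 0 ≤ b i) (hab : ∀ i, b i = 0 → a i = 0)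
    (hsum : ∑ i, b i ≤ ∑ i, a i) :
    0 ≤ ∑ i, a i * Real.logb 2 (a i / b i) := by
  refine le_trans ?_ (logsum a b ha hb hab)
  set A := ∑ i, a i
  set B := ∑ i, b i
  by_cases hA0 : A = 0
  · simp [hA0]
  · have hApos : 0 < A := lt_of_le_of_ne (Finset.sum_nonneg fun i _ => ha i) (Ne.symm hA0)
    have hBpos : 0 < B := by
      rcases lt_or_eq_of_le (Finset.sum_nonneg fun i _ => hb i) with h | h
      · exact h
      · exfalso
        have hb0 : ∀ i, b i = 0 :=
          fun i => (Finset.sum_eq_zero_iff_of_nonneg (fun i _ => hb i)).1 h.symm i (Finset.mem_univ i)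
        exact hA0 (Finset.sum_eq_zero fun i _ => hab i (hb0 i))
    apply mul_nonneg (le_of_lt hApos)
    apply Real.logb_nonneg one_lt_two
    rw [le_div_iff₀ hBpos]
    linarith

end Gibbs
section SumUtil

open Finset Real

theorem sum_if_eq₃ {α β γ : Type*} [Fintype α] [Fintype β] [Fintype γ]
    [DecidableEq α] [DecidableEq β] [DecidableEq γ]
    (a : α) (b : β) (c : γ) (F : α → β → γ → ℝ) :
    ∑ x : α, ∑ y : β, ∑ z : γ, (if a = x ∧ b = y ∧ c = z then F x y z else 0) = F a b c := by
  rw [Finset.sum_eq_single a]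
  · rw [Finset.sum_eq_single b]
    · rw [Finset.sum_eq_single c]
      · simp
      · intro z _ hz; simp [Ne.symm hz]
      · intro h; exact absurd (Finset.mem_univ c) h
    · intro y _ hy; simp [Ne.symm hy]
    · intro h; exact absurd (Finset.mem_univ b) h
  · intro x _ hx; simp [Ne.symm hx]
  · intro h; exact absurd (Finset.mem_univ a) h

theorem sum_if_eq₂ {α β : Type*} [Fintype α] [Fintype β] [DecidableEq α] [DecidableEq β]
    (a : α) (b : β) (F : α → β → ℝ) :
    ∑ x : α, ∑ y : β, (if a = x ∧ b = y then F x y else 0) = F a b := by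
  rw [Finset.sum_eq_single a]
  · rw [Finset.sum_eq_single b]
    · simp
    · intro y _ hy; simp [Ne.symm hy]
    · intro h; exact absurd (Finset.mem_univ b) h
  · intro x _ hx; simp [Ne.symm hx]
  · intro h; exact absurd (Finset.mem_univ a) h

theorem sum_fn_prod {ι β : Type*} [Fintype ι] [DecidableEq ι] [Fintype β]
    (F : ι → β → ℝ) : ∑ w : ι → β, ∏ i, F i (w i) = ∏ i, ∑ b, F i b := by
  rw [Finset.prod_univ_sum]
  simp [Fintype.piFinset_univ]

theorem sum_pi_if {ι β : Type*} [Fintype ι] [DecidableEq ι] [Fintype β] [DecidableEq β]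
    (qr : ι → β → ℝ) (h1 : ∀ k, ∑ b, qr k b = 1) (i : ι) (c : β) :
    ∑ w : ι → β, (if w i = c then ∏ k, qr k (w k) else 0) = qr i c := by
  have key : ∀ w : ι → β, (if w i = c then ∏ k, qr k (w k) else 0)
      = ∏ k, (if k = i then (if w k = c then qr k (w k) else 0) else qr k (w k)) := by
    intro w
    by_cases hw : w i = c
    · rw [if_pos hw]
      apply Finset.prod_congr rfl
      intro k _
      by_cases hk : k = i
      · subst hk; simp [hw]
      · simp [hk]
    · rw [if_neg hw]
      rw [eq_comm]
      apply Finset.prod_eq_zero (Finset.mem_univ i)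
      simp [hw]
  rw [Finset.sum_congr rfl fun w _ => key w,
    sum_fn_prod (fun k b => if k = i then (if b = c then qr k b else 0) else qr k b)]
  rw [Finset.prod_eq_single i]
  · simp only [if_pos rfl]
    rw [Finset.sum_eq_single c]
    · simp
    · intro b _ hb; simp [hb]
    · intro h; exact absurd (Finset.mem_univ c) h
  · intro k _ hk
    simp [hk, h1 k]
  · intro h; exact absurd (Finset.mem_univ i) h

theorem mi_eq {Ω α β : Type*} [Fintype Ω] [Fintype α] [Fintype β]
    [DecidableEq α] [DecidableEq β] (p : Ω → ℝ) (X : Ω → α) (Y : Ω → β) :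
    mi p X Y = ∑ x : α, ∑ y : β, pr p (fun ω => X ω = x ∧ Y ω = y) *
      Real.logb 2 ((pr p (fun ω => X ω = x ∧ Y ω = y) * (∑ ω, p ω)) /
        (pr p (fun ω => X ω = x) * pr p (fun ω => Y ω = y))) := by
  unfold mi condMI
  apply Finset.sum_congr rfl; intro x _
  apply Finset.sum_congr rfl; intro y _
  rw [Fin.sum_univ_one]
  have h1 : pr p (fun ω => X ω = x ∧ Y ω = y ∧ (fun _ : Ω => (0 : Fin 1)) ω = 0)
      = pr p (fun ω => X ω = x ∧ Y ω = y) := pr_congr p (by simp)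
  have h2 : pr p (fun ω => (fun _ : Ω => (0 : Fin 1)) ω = 0) = ∑ ω, p ω := by
    unfold pr; simp
  have h3 : pr p (fun ω => X ω = x ∧ (fun _ : Ω => (0 : Fin 1)) ω = 0)
      = pr p (fun ω => X ω = x) := pr_congr p (by simp)
  have h4 : pr p (fun ω => Y ω = y ∧ (fun _ : Ω => (0 : Fin 1)) ω = 0)
      = pr p (fun ω => Y ω = y) := pr_congr p (by simp)
  rw [h1, h2, h3, h4]

end SumUtil

theorem sum_pi_prod_mul {ι β : Type*} [Fintype ι] [DecidableEq ι] [Fintype β]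
    (A : ℝ) (F : ι → β → ℝ) :
    ∑ w : ι → β, A * ∏ k, F k (w k) = A * ∏ k, ∑ b, F k b := by
  rw [← Finset.mul_sum, sum_fn_prod F]

theorem sum_pi_prod_one {ι β : Type*} [Fintype ι] [DecidableEq ι] [Fintype β]
    (A : ℝ) (F : ι → β → ℝ) (h1 : ∀ k, ∑ b, F k b = 1) :
    ∑ w : ι → β, A * ∏ k, F k (w k) = A := by
  rw [sum_pi_prod_mul A F, Finset.prod_congr rfl fun k _ => h1 k]
  simp

theorem sum_pi_if_mul {ι β : Type*} [Fintype ι] [DecidableEq ι] [Fintype β] [DecidableEq β]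
    (A : ℝ) (F : ι → β → ℝ) (h1 : ∀ k, ∑ b, F k b = 1) (i : ι) (c : β) :
    ∑ w : ι → β, (if w i = c then A * ∏ k, F k (w k) else 0) = A * F i c := by
  calc ∑ w : ι → β, (if w i = c then A * ∏ k, F k (w k) else 0)
      = ∑ w : ι → β, A * (if w i = c then ∏ k, F k (w k) else 0) := by
        apply Finset.sum_congr rfl; intro w _
        by_cases hw : w i = c <;> simp [hw]
    _ = A * ∑ w : ι → β, (if w i = c then ∏ k, F k (w k) else 0) :=
        (Finset.mul_sum _ _ _).symm
    _ = A * F i c := by rw [sum_pi_if F h1 i c]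

theorem sum_triple {A B C : Type*} [Fintype A] [Fintype B] [Fintype C]
    (F : A × B × C → ℝ) : ∑ z : A × B × C, F z = ∑ a, ∑ b, ∑ c, F (a, b, c) := by
  rw [Fintype.sum_prod_type]
  exact Finset.sum_congr rfl fun a _ => Fintype.sum_prod_type (f := fun z => F (a, z))

theorem sum_triple' {A B C : Type*} [Fintype A] [Fintype B] [Fintype C]
    (F : A → B → C → ℝ) :
    ∑ z : A × B × C, F z.1 z.2.1 z.2.2 = ∑ a, ∑ b, ∑ c, F a b c :=
  sum_triple (fun z => F z.1 z.2.1 z.2.2)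

namespace RD

open Finset Real

variable {Ω 𝒰 𝒮 𝒱 𝒳 𝒴 : Type*} [Fintype Ω] [Fintype 𝒰] [Fintype 𝒮] [Fintype 𝒱]
    [Fintype 𝒳] [Fintype 𝒴]
    [DecidableEq 𝒰] [DecidableEq 𝒮] [DecidableEq 𝒱] [DecidableEq 𝒳] [DecidableEq 𝒴]
    {K N : ℕ}

/-- probability of an atomic configuration -/
noncomputable def PA (p : Ω → ℝ) (U : Fin K → Ω → 𝒰) (S : Fin K → Ω → 𝒮)
    (Y : Fin N → Ω → 𝒴) (w : (Fin K → 𝒰) × (Fin K → 𝒮) × (Fin N → 𝒴)) : ℝ :=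
  pr p (fun ω => (∀ i, U i ω = w.1 i ∧ S i ω = w.2.1 i) ∧ (∀ j, Y j ω = w.2.2 j))

noncomputable def Pusv (p : Ω → ℝ) (U : Fin K → Ω → 𝒰) (V : Fin K → Ω → 𝒱)
    (S : Fin K → Ω → 𝒮) (i : Fin K) (u : 𝒰) (v : 𝒱) (s : 𝒮) : ℝ :=
  pr p (fun ω => U i ω = u ∧ V i ω = v ∧ S i ω = s)

noncomputable def Pvs (p : Ω → ℝ) (V : Fin K → Ω → 𝒱) (S : Fin K → Ω → 𝒮)
    (i : Fin K) (v : 𝒱) (s : 𝒮) : ℝ :=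
  pr p (fun ω => V i ω = v ∧ S i ω = s)

noncomputable def Px (p : Ω → ℝ) (X : Fin N → Ω → 𝒳) (j : Fin N) (x : 𝒳) : ℝ :=
  pr p (fun ω => X j ω = x)

noncomputable def Py (p : Ω → ℝ) (Y : Fin N → Ω → 𝒴) (j : Fin N) (y : 𝒴) : ℝ :=
  pr p (fun ω => Y j ω = y)

noncomputable def Pxy (p : Ω → ℝ) (X : Fin N → Ω → 𝒳) (Y : Fin N → Ω → 𝒴)
    (j : Fin N) (x : 𝒳) (y : 𝒴) : ℝ :=
  pr p (fun ω => X j ω = x ∧ Y j ω = y)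

noncomputable def qS (q : 𝒰 × 𝒮 → ℝ) (s : 𝒮) : ℝ := ∑ u, q (u, s)

noncomputable def pib (p : Ω → ℝ) (U : Fin K → Ω → 𝒰) (V : Fin K → Ω → 𝒱)
    (S : Fin K → Ω → 𝒮) (u : 𝒰) (s : 𝒮) (v : 𝒱) : ℝ :=
  (K:ℝ)⁻¹ * ∑ i, Pusv p U V S i u v s

noncomputable def mb (p : Ω → ℝ) (V : Fin K → Ω → 𝒱) (S : Fin K → Ω → 𝒮)
    (v : 𝒱) (s : 𝒮) : ℝ :=
  (K:ℝ)⁻¹ * ∑ i, Pvs p V S i v s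

variable (p : Ω → ℝ)
    (U : Fin K → Ω → 𝒰) (S : Fin K → Ω → 𝒮) (V : Fin K → Ω → 𝒱)
    (X : Fin N → Ω → 𝒳) (Y : Fin N → Ω → 𝒴)
    (q : 𝒰 × 𝒮 → ℝ)

theorem pr_true (hp1 : ∑ ω, p ω = 1) : pr p (fun _ => True) = 1 := by
  unfold pr; simpa using hp1

theorem pr_rv_one {α : Type*} [Fintype α] [DecidableEq α] (hp1 : ∑ ω, p ω = 1)
    (Z : Ω → α) : ∑ a, pr p (fun ω => Z ω = a) = 1 := by
  calc ∑ a, pr p (fun ω => Z ω = a) = ∑ a, pr p (fun ω => True ∧ Z ω = a) :=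
        Finset.sum_congr rfl fun a _ => pr_congr p (fun ω => by tauto)
    _ = pr p (fun _ => True) := (pr_partition p Z _).symm
    _ = 1 := pr_true p hp1

theorem marg_q (hq1 : ∑ w, q w = 1)
    (hiid : ∀ w : Fin K → 𝒰 × 𝒮,
      pr p (fun ω => ∀ i : Fin K, (U i ω, S i ω) = w i) = ∏ i : Fin K, q (w i)) :
    ∀ (i : Fin K) u s, pr p (fun ω => U i ω = u ∧ S i ω = s) = q (u, s) := by
  classical
  intro i u s
  rw [pr_partition p (fun ω => (fun k : Fin K => (U k ω, S k ω)))]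
  have step : ∀ w : Fin K → 𝒰 × 𝒮,
      pr p (fun ω => (U i ω = u ∧ S i ω = s) ∧ (fun k : Fin K => (U k ω, S k ω)) = w)
      = if w i = (u, s) then ∏ k, q (w k) else 0 := by
    intro w
    have hdet : ∀ ω, ((fun k : Fin K => (U k ω, S k ω)) = w) →
        ((U i ω = u ∧ S i ω = s) ↔ (w i = (u, s))) := by
      intro ω hA
      have h1 : ∀ k, (U k ω, S k ω) = w k := fun k => congrFun hA k
      constructor
      · rintro ⟨h2, h3⟩; rw [← h1 i, h2, h3]
      · intro h2
        have := (h1 i).trans h2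
        exact ⟨congrArg Prod.fst this, congrArg Prod.snd this⟩
    rw [pr_determined p hdet]
    have hA : pr p (fun ω => (fun k : Fin K => (U k ω, S k ω)) = w) = ∏ k, q (w k) := by
      rw [pr_congr p (F := fun ω => ∀ k, (U k ω, S k ω) = w k) (fun ω => funext_iff)]
      exact hiid w
    rw [hA]
  rw [Finset.sum_congr rfl fun w _ => step w,
    sum_pi_if (fun _ => q) (fun _ => hq1) i (u, s)]

theorem marg_S (hq1 : ∑ w, q w = 1)
    (hiid : ∀ w : Fin K → 𝒰 × 𝒮,
      pr p (fun ω => ∀ i : Fin K, (U i ω, S i ω) = w i) = ∏ i : Fin K, q (w i)) :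
    ∀ (i : Fin K) s, pr p (fun ω => S i ω = s) = qS q s := by
  intro i s
  calc pr p (fun ω => S i ω = s) = ∑ u, pr p (fun ω => S i ω = s ∧ U i ω = u) :=
        pr_partition p (U i) _
    _ = ∑ u, q (u, s) := Finset.sum_congr rfl fun u _ =>
        (pr_congr p (fun ω => by tauto)).trans (marg_q p U S q hq1 hiid i u s)
    _ = qS q s := rfl

theorem qS_one (hq1 : ∑ w, q w = 1) : ∑ s, qS q s = 1 := by
  unfold qS
  rw [Finset.sum_comm, ← Fintype.sum_prod_type]
  exact hq1

theorem marg_m1 (hq1 : ∑ w, q w = 1)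
    (hiid : ∀ w : Fin K → 𝒰 × 𝒮,
      pr p (fun ω => ∀ i : Fin K, (U i ω, S i ω) = w i) = ∏ i : Fin K, q (w i)) :
    ∀ (i : Fin K) u s, ∑ v, Pusv p U V S i u v s = q (u, s) := by
  intro i u s
  calc ∑ v, Pusv p U V S i u v s
      = ∑ v, pr p (fun ω => (U i ω = u ∧ S i ω = s) ∧ V i ω = v) :=
        Finset.sum_congr rfl fun v _ => pr_congr p (fun ω => by tauto)
    _ = pr p (fun ω => U i ω = u ∧ S i ω = s) := (pr_partition p (V i) _).symm
    _ = q (u, s) := marg_q p U S q hq1 hiid i u s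

theorem marg_m2 : ∀ (i : Fin K) v s, ∑ u, Pusv p U V S i u v s = Pvs p V S i v s := by
  intro i v s
  calc ∑ u, Pusv p U V S i u v s
      = ∑ u, pr p (fun ω => (V i ω = v ∧ S i ω = s) ∧ U i ω = u) :=
        Finset.sum_congr rfl fun u _ => pr_congr p (fun ω => by tauto)
    _ = pr p (fun ω => V i ω = v ∧ S i ω = s) := (pr_partition p (U i) _).symm
    _ = Pvs p V S i v s := rfl

theorem marg_Py : ∀ (j : Fin N) y, Py p Y j y = ∑ x, Pxy p X Y j x y := by
  intro j y
  calc Py p Y j y = ∑ x, pr p (fun ω => Y j ω = y ∧ X j ω = x) := pr_partition p (X j) _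
    _ = ∑ x, Pxy p X Y j x y := Finset.sum_congr rfl fun x _ => pr_congr p (fun ω => by tauto)


theorem atom_dec (c : (Fin K → 𝒰) × (Fin K → 𝒮) × (Fin N → 𝒴) → Prop) [DecidablePred c]
    (E : Ω → Prop) [DecidablePred E]
    (h : ∀ w ω, ((∀ i, U i ω = w.1 i ∧ S i ω = w.2.1 i) ∧ (∀ j, Y j ω = w.2.2 j)) →
      (E ω ↔ c w)) :
    pr p E = ∑ w : (Fin K → 𝒰) × (Fin K → 𝒮) × (Fin N → 𝒴),
      (if c w then PA p U S Y w else 0) := by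
  rw [pr_partition p
    (fun ω => ((fun i => U i ω), (fun i => S i ω), (fun j => Y j ω))) E]
  apply Finset.sum_congr rfl
  intro w _
  have hiff : ∀ ω, ((fun i => U i ω, fun i => S i ω, fun j => Y j ω)
      = w) ↔ ((∀ i, U i ω = w.1 i ∧ S i ω = w.2.1 i) ∧ (∀ j, Y j ω = w.2.2 j)) := by
    intro ω
    obtain ⟨w1, w2, w3⟩ := w
    simp only [Prod.mk.injEq, funext_iff]
    constructor
    · rintro ⟨h1, h2, h3⟩
      exact ⟨fun i => ⟨h1 i, h2 i⟩, h3⟩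
    · rintro ⟨h1, h2⟩
      exact ⟨fun i => (h1 i).1, fun i => (h1 i).2, h2⟩
  rw [pr_congr p (F := fun ω => E ω ∧ ((∀ i, U i ω = w.1 i ∧ S i ω = w.2.1 i) ∧
      (∀ j, Y j ω = w.2.2 j))) (fun ω => and_congr_right fun _ => hiff ω)]
  rw [pr_determined p (fun ω hA => h w ω hA)]
  rfl

theorem PA_form (W : 𝒳 → 𝒴 → ℝ) (f : (Fin K → 𝒰) → (Fin K → 𝒮) → Fin N → 𝒳)
    (hiid : ∀ w : Fin K → 𝒰 × 𝒮,
      pr p (fun ω => ∀ i : Fin K, (U i ω, S i ω) = w i) = ∏ i : Fin K, q (w i))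
    (hch : ∀ (us : Fin K → 𝒰) (ss : Fin K → 𝒮) (ys : Fin N → 𝒴),
      pr p (fun ω => (∀ i : Fin K, U i ω = us i ∧ S i ω = ss i) ∧
          (∀ j : Fin N, Y j ω = ys j)) =
        pr p (fun ω => ∀ i : Fin K, U i ω = us i ∧ S i ω = ss i) *
          ∏ j : Fin N, W (f us ss j) (ys j)) :
    ∀ w : (Fin K → 𝒰) × (Fin K → 𝒮) × (Fin N → 𝒴),
      PA p U S Y w = (∏ i, q (w.1 i, w.2.1 i)) * ∏ j, W (f w.1 w.2.1 j) (w.2.2 j) := by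
  intro w
  unfold PA
  rw [hch w.1 w.2.1 w.2.2]
  congr 1
  calc pr p (fun ω => ∀ i, U i ω = w.1 i ∧ S i ω = w.2.1 i)
      = pr p (fun ω => ∀ i, (U i ω, S i ω) = (w.1 i, w.2.1 i)) :=
        pr_congr p (fun ω => by simp [Prod.ext_iff])
    _ = ∏ i, q (w.1 i, w.2.1 i) := hiid (fun i => (w.1 i, w.2.1 i))

theorem PA_one (hp1 : ∑ ω, p ω = 1) :
    ∑ w : (Fin K → 𝒰) × (Fin K → 𝒮) × (Fin N → 𝒴), PA p U S Y w = 1 := by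
  classical
  have := atom_dec p U S Y (fun _ => True) (fun _ => True) (fun w ω _ => by simp)
  rw [pr_true p hp1] at this
  simpa using this.symm

theorem Pusv_rep (g : (Fin N → 𝒴) → (Fin K → 𝒮) → Fin K → 𝒱)
    (hg : ∀ ω i, V i ω = g (fun j => Y j ω) (fun j => S j ω) i) :
    ∀ (i : Fin K) (z : 𝒰 × 𝒱 × 𝒮),
      Pusv p U V S i z.1 z.2.1 z.2.2 = ∑ w : (Fin K → 𝒰) × (Fin K → 𝒮) × (Fin N → 𝒴),
        (if (w.1 i, g w.2.2 w.2.1 i, w.2.1 i) = z then PA p U S Y w else 0) := by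
  classical
  intro i z
  apply atom_dec p U S Y (fun w => (w.1 i, g w.2.2 w.2.1 i, w.2.1 i) = z)
    (fun ω => U i ω = z.1 ∧ V i ω = z.2.1 ∧ S i ω = z.2.2)
  intro w ω hA
  have hU : U i ω = w.1 i := (hA.1 i).1
  have hS : S i ω = w.2.1 i := (hA.1 i).2
  have hV : V i ω = g w.2.2 w.2.1 i := by
    rw [hg ω i]
    congr 1
    · exact funext hA.2
    · exact funext (fun k => (hA.1 k).2)
  rw [hU, hS, hV]
  constructor
  · rintro ⟨h1, h2, h3⟩
    obtain ⟨z1, z2, z3⟩ := z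
    simp only [Prod.mk.injEq]
    exact ⟨h1, h2, h3⟩
  · intro h
    obtain ⟨z1, z2, z3⟩ := z
    simp only [Prod.mk.injEq] at h
    exact ⟨h.1, h.2.1, h.2.2⟩

theorem Px_rep (f : (Fin K → 𝒰) → (Fin K → 𝒮) → Fin N → 𝒳)
    (hf : ∀ ω i, X i ω = f (fun j => U j ω) (fun j => S j ω) i) :
    ∀ (j : Fin N) (x : 𝒳),
      Px p X j x = ∑ w : (Fin K → 𝒰) × (Fin K → 𝒮) × (Fin N → 𝒴),
        (if f w.1 w.2.1 j = x then PA p U S Y w else 0) := by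
  classical
  intro j x
  apply atom_dec p U S Y (fun w => f w.1 w.2.1 j = x) (fun ω => X j ω = x)
  intro w ω hA
  have hX : X j ω = f w.1 w.2.1 j := by
    rw [hf ω j]
    congr 1
    · exact funext (fun k => (hA.1 k).1)
    · exact funext (fun k => (hA.1 k).2)
  rw [hX]

theorem Pxy_rep (f : (Fin K → 𝒰) → (Fin K → 𝒮) → Fin N → 𝒳)
    (hf : ∀ ω i, X i ω = f (fun j => U j ω) (fun j => S j ω) i) :
    ∀ (j : Fin N) (z : 𝒳 × 𝒴),
      Pxy p X Y j z.1 z.2 = ∑ w : (Fin K → 𝒰) × (Fin K → 𝒮) × (Fin N → 𝒴),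
        (if (f w.1 w.2.1 j, w.2.2 j) = z then PA p U S Y w else 0) := by
  classical
  intro j z
  apply atom_dec p U S Y (fun w => (f w.1 w.2.1 j, w.2.2 j) = z)
    (fun ω => X j ω = z.1 ∧ Y j ω = z.2)
  intro w ω hA
  have hX : X j ω = f w.1 w.2.1 j := by
    rw [hf ω j]
    congr 1
    · exact funext (fun k => (hA.1 k).1)
    · exact funext (fun k => (hA.1 k).2)
  have hY : Y j ω = w.2.2 j := hA.2 j
  rw [hX, hY]
  obtain ⟨z1, z2⟩ := z
  simp [Prod.mk.injEq]


theorem Pxy_eq (W : 𝒳 → 𝒴 → ℝ) (hW1 : ∀ x, ∑ y, W x y = 1)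
    (f : (Fin K → 𝒰) → (Fin K → 𝒮) → Fin N → 𝒳)
    (hf : ∀ ω i, X i ω = f (fun j => U j ω) (fun j => S j ω) i)
    (hiid : ∀ w : Fin K → 𝒰 × 𝒮,
      pr p (fun ω => ∀ i : Fin K, (U i ω, S i ω) = w i) = ∏ i : Fin K, q (w i))
    (hch : ∀ (us : Fin K → 𝒰) (ss : Fin K → 𝒮) (ys : Fin N → 𝒴),
      pr p (fun ω => (∀ i : Fin K, U i ω = us i ∧ S i ω = ss i) ∧
          (∀ j : Fin N, Y j ω = ys j)) =
        pr p (fun ω => ∀ i : Fin K, U i ω = us i ∧ S i ω = ss i) *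
          ∏ j : Fin N, W (f us ss j) (ys j)) :
    ∀ (j : Fin N) (x : 𝒳) (y : 𝒴), Pxy p X Y j x y = Px p X j x * W x y := by
  classical
  intro j x y
  have hPAf := PA_form p U S Y q W f hiid hch
  have lemB : ∑ w : (Fin K → 𝒰) × (Fin K → 𝒮) × (Fin N → 𝒴),
      (if f w.1 w.2.1 j = x then PA p U S Y w else 0)
      = ∑ uu, ∑ ss, (if f uu ss j = x then ∏ i, q (uu i, ss i) else 0) := by
    rw [Fintype.sum_prod_type]
    apply Finset.sum_congr rfl; intro uu _
    rw [Fintype.sum_prod_type]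
    apply Finset.sum_congr rfl; intro ss _
    by_cases hc : f uu ss j = x
    · simp only [hc, if_true]
      calc ∑ yy : Fin N → 𝒴, PA p U S Y (uu, ss, yy)
          = ∑ yy : Fin N → 𝒴, (∏ i, q (uu i, ss i)) * ∏ k, W (f uu ss k) (yy k) := by
            apply Finset.sum_congr rfl; intro yy _; exact hPAf (uu, ss, yy)
        _ = ∏ i, q (uu i, ss i) :=
            sum_pi_prod_one _ (fun k b => W (f uu ss k) b) (fun k => hW1 _)
    · simp [hc]
  have lemA : ∑ w : (Fin K → 𝒰) × (Fin K → 𝒮) × (Fin N → 𝒴),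
      (if (f w.1 w.2.1 j, w.2.2 j) = (x, y) then PA p U S Y w else 0)
      = (∑ uu, ∑ ss, (if f uu ss j = x then ∏ i, q (uu i, ss i) else 0)) * W x y := by
    rw [Finset.sum_mul]
    rw [Fintype.sum_prod_type]
    apply Finset.sum_congr rfl; intro uu _
    rw [Finset.sum_mul, Fintype.sum_prod_type]
    apply Finset.sum_congr rfl; intro ss _
    by_cases hc : f uu ss j = x
    · simp only [hc, Prod.mk.injEq, true_and, if_true]
      calc ∑ yy : Fin N → 𝒴, (if yy j = y then PA p U S Y (uu, ss, yy) else 0)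
          = ∑ yy : Fin N → 𝒴, (if yy j = y then (∏ i, q (uu i, ss i)) * ∏ k, W (f uu ss k) (yy k)
              else 0) := by
            apply Finset.sum_congr rfl; intro yy _
            by_cases hy : yy j = y
            · simp only [hy, if_true]; exact hPAf (uu, ss, yy)
            · simp [hy]
        _ = (∏ i, q (uu i, ss i)) * W (f uu ss j) y :=
            sum_pi_if_mul _ (fun k b => W (f uu ss k) b) (fun k => hW1 _) j y
        _ = (∏ i, q (uu i, ss i)) * W x y := by rw [hc]
    · simp [hc, Prod.mk.injEq]
  calc Pxy p X Y j x y
      = ∑ w : (Fin K → 𝒰) × (Fin K → 𝒮) × (Fin N → 𝒴),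
        (if (f w.1 w.2.1 j, w.2.2 j) = (x, y) then PA p U S Y w else 0) :=
        Pxy_rep p U S X Y f hf j (x, y)
    _ = (∑ uu, ∑ ss, (if f uu ss j = x then ∏ i, q (uu i, ss i) else 0)) * W x y := lemA
    _ = (∑ w : (Fin K → 𝒰) × (Fin K → 𝒮) × (Fin N → 𝒴),
        (if f w.1 w.2.1 j = x then PA p U S Y w else 0)) * W x y := by rw [lemB]
    _ = Px p X j x * W x y := by rw [← Px_rep p U S X Y f hf j x]

theorem condMI_form (hq1 : ∑ w, q w = 1)
    (hiid : ∀ w : Fin K → 𝒰 × 𝒮,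
      pr p (fun ω => ∀ i : Fin K, (U i ω, S i ω) = w i) = ∏ i : Fin K, q (w i)) :
    ∀ i : Fin K, condMI p (U i) (V i) (S i) = ∑ z : 𝒰 × 𝒱 × 𝒮,
      Pusv p U V S i z.1 z.2.1 z.2.2 * Real.logb 2
        ((Pusv p U V S i z.1 z.2.1 z.2.2 * qS q z.2.2) /
          (q (z.1, z.2.2) * Pvs p V S i z.2.1 z.2.2)) := by
  intro i
  rw [Fintype.sum_prod_type]
  unfold condMI
  apply Finset.sum_congr rfl; intro u _
  rw [Fintype.sum_prod_type]
  apply Finset.sum_congr rfl; intro v _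
  apply Finset.sum_congr rfl; intro s _
  rw [marg_q p U S q hq1 hiid i u s, marg_S p U S q hq1 hiid i s]
  rfl

theorem mi_form (hp1 : ∑ ω, p ω = 1) :
    ∀ j : Fin N, mi p (X j) (Y j) = ∑ z : 𝒳 × 𝒴,
      Pxy p X Y j z.1 z.2 * Real.logb 2
        (Pxy p X Y j z.1 z.2 / (Px p X j z.1 * Py p Y j z.2)) := by
  intro j
  rw [Fintype.sum_prod_type]
  rw [mi_eq p (X j) (Y j), hp1]
  simp only [mul_one]
  rfl


theorem Pusv_le_q (hp : ∀ ω, 0 ≤ p ω) (hq1 : ∑ w, q w = 1)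
    (hiid : ∀ w : Fin K → 𝒰 × 𝒮,
      pr p (fun ω => ∀ i : Fin K, (U i ω, S i ω) = w i) = ∏ i : Fin K, q (w i))
    (i : Fin K) (u : 𝒰) (v : 𝒱) (s : 𝒮) : Pusv p U V S i u v s ≤ q (u, s) := by
  rw [← marg_q p U S q hq1 hiid i u s]
  exact pr_mono p hp (fun ω h => ⟨h.1, h.2.2⟩)

theorem Pusv_le_Pvs (hp : ∀ ω, 0 ≤ p ω) (i : Fin K) (u : 𝒰) (v : 𝒱) (s : 𝒮) :
    Pusv p U V S i u v s ≤ Pvs p V S i v s :=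
  pr_mono p hp (fun ω h => ⟨h.2.1, h.2.2⟩)

theorem q_le_qS (hq : ∀ w, 0 ≤ q w) (u : 𝒰) (s : 𝒮) : q (u, s) ≤ qS q s :=
  Finset.single_le_sum (fun u' _ => hq (u', s)) (Finset.mem_univ u)

theorem qS_nonneg (hq : ∀ w, 0 ≤ q w) (s : 𝒮) : 0 ≤ qS q s :=
  Finset.sum_nonneg fun u _ => hq (u, s)

theorem pib_nonneg (hp : ∀ ω, 0 ≤ p ω) (u : 𝒰) (s : 𝒮) (v : 𝒱) :
    0 ≤ pib p U V S u s v :=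
  mul_nonneg (by positivity) (Finset.sum_nonneg fun i _ => pr_nonneg p hp _)

theorem pib_margU (hK : 0 < K) (hq1 : ∑ w, q w = 1)
    (hiid : ∀ w : Fin K → 𝒰 × 𝒮,
      pr p (fun ω => ∀ i : Fin K, (U i ω, S i ω) = w i) = ∏ i : Fin K, q (w i)) :
    ∀ u s, ∑ v, pib p U V S u s v = q (u, s) := by
  intro u s
  have hKne : (K:ℝ) ≠ 0 := Nat.cast_ne_zero.mpr hK.ne'
  unfold pib
  rw [← Finset.mul_sum, Finset.sum_comm]
  rw [Finset.sum_congr rfl fun i _ => marg_m1 p U S V q hq1 hiid i u s]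
  rw [Finset.sum_const, Finset.card_univ, Fintype.card_fin, nsmul_eq_mul]
  rw [← mul_assoc, inv_mul_cancel₀ hKne, one_mul]

theorem pib_margV : ∀ v s, ∑ u, pib p U V S u s v = mb p V S v s := by
  intro v s
  unfold pib mb
  rw [← Finset.mul_sum, Finset.sum_comm]
  rw [Finset.sum_congr rfl fun i _ => marg_m2 p U S V i v s]

theorem pib_eq_zero (hp : ∀ ω, 0 ≤ p ω) (hq1 : ∑ w, q w = 1)
    (hiid : ∀ w : Fin K → 𝒰 × 𝒮,
      pr p (fun ω => ∀ i : Fin K, (U i ω, S i ω) = w i) = ∏ i : Fin K, q (w i))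
    {u : 𝒰} {s : 𝒮} (h0 : q (u, s) = 0) (v : 𝒱) : pib p U V S u s v = 0 := by
  unfold pib
  have : ∀ i : Fin K, Pusv p U V S i u v s = 0 := by
    intro i
    refine le_antisymm ?_ (pr_nonneg p hp _)
    rw [← h0]
    exact Pusv_le_q p U S V q hp hq1 hiid i u v s
  rw [Finset.sum_congr rfl fun i _ => this i]
  simp

/-- averaged test channel -/
noncomputable def tt (p : Ω → ℝ) (U : Fin K → Ω → 𝒰) (V : Fin K → Ω → 𝒱)
    (S : Fin K → Ω → 𝒮) (q : 𝒰 × 𝒮 → ℝ) (u : 𝒰) (s : 𝒮) (v : 𝒱) : ℝ :=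
  if q (u, s) = 0 then ((Fintype.card 𝒱 : ℝ))⁻¹ else pib p U V S u s v / q (u, s)

theorem tt_nonneg (hp : ∀ ω, 0 ≤ p ω) (hq : ∀ w, 0 ≤ q w) (u : 𝒰) (s : 𝒮) (v : 𝒱) :
    0 ≤ tt p U V S q u s v := by
  unfold tt
  split
  · positivity
  · exact div_nonneg (pib_nonneg p U S V hp u s v) (hq (u, s))

theorem tt_row (h𝒱 : Nonempty 𝒱) (hK : 0 < K) (hq1 : ∑ w, q w = 1)
    (hiid : ∀ w : Fin K → 𝒰 × 𝒮,
      pr p (fun ω => ∀ i : Fin K, (U i ω, S i ω) = w i) = ∏ i : Fin K, q (w i)) :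
    ∀ u s, ∑ v, tt p U V S q u s v = 1 := by
  intro u s
  unfold tt
  by_cases h0 : q (u, s) = 0
  · simp only [h0, if_true]
    rw [Finset.sum_const, Finset.card_univ, nsmul_eq_mul]
    rw [mul_inv_cancel₀]
    exact_mod_cast Fintype.card_ne_zero
  · simp only [h0, if_false]
    rw [← Finset.sum_div, pib_margU p U S V q hK hq1 hiid u s, div_self h0]

theorem qt_eq (hp : ∀ ω, 0 ≤ p ω) (hq1 : ∑ w, q w = 1)
    (hiid : ∀ w : Fin K → 𝒰 × 𝒮,
      pr p (fun ω => ∀ i : Fin K, (U i ω, S i ω) = w i) = ∏ i : Fin K, q (w i)) :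
    ∀ u s v, q (u, s) * tt p U V S q u s v = pib p U V S u s v := by
  intro u s v
  unfold tt
  by_cases h0 : q (u, s) = 0
  · simp only [h0, if_true, zero_mul]
    exact (pib_eq_zero p U S V q hp hq1 hiid h0 v).symm
  · simp only [h0, if_false]
    rw [mul_div_cancel₀ _ h0]

-- distortion of the averaged test channel
theorem dist_eq (hK : 0 < K) (d : 𝒰 → 𝒱 → ℝ) :
    ∑ u, ∑ s, ∑ v, pib p U V S u s v * d u v
      = (K:ℝ)⁻¹ * ∑ ω, p ω * ∑ i, d (U i ω) (V i ω) := by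
  have key : ∀ i : Fin K, ∑ z : 𝒰 × 𝒮 × 𝒱, Pusv p U V S i z.1 z.2.2 z.2.1 * d z.1 z.2.2
      = ∑ ω, p ω * d (U i ω) (V i ω) := by
    intro i
    have e1 : ∀ z : 𝒰 × 𝒮 × 𝒱, Pusv p U V S i z.1 z.2.2 z.2.1 * d z.1 z.2.2
        = ∑ ω, (if (U i ω, S i ω, V i ω) = z then p ω * d z.1 z.2.2 else 0) := by
      intro z
      unfold Pusv pr
      rw [Finset.sum_mul]
      apply Finset.sum_congr rfl; intro ω _
      rw [ite_mul, zero_mul]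
      refine if_congr ?_ rfl rfl
      obtain ⟨z1, z2, z3⟩ := z
      simp only [Prod.mk.injEq]
      tauto
    rw [Finset.sum_congr rfl fun z _ => e1 z, Finset.sum_comm]
    apply Finset.sum_congr rfl; intro ω _
    rw [Finset.sum_ite_eq univ (U i ω, S i ω, V i ω)
      (fun z => p ω * d z.1 z.2.2)]
    simp
  calc ∑ u, ∑ s, ∑ v, pib p U V S u s v * d u v
      = ∑ z : 𝒰 × 𝒮 × 𝒱, pib p U V S z.1 z.2.1 z.2.2 * d z.1 z.2.2 :=
        (sum_triple' (fun u s v => pib p U V S u s v * d u v)).symm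
    _ = ∑ z : 𝒰 × 𝒮 × 𝒱, (K:ℝ)⁻¹ * ∑ i, Pusv p U V S i z.1 z.2.2 z.2.1 * d z.1 z.2.2 := by
        apply Finset.sum_congr rfl; intro z _
        unfold pib
        rw [mul_assoc, Finset.sum_mul]
    _ = (K:ℝ)⁻¹ * ∑ z : 𝒰 × 𝒮 × 𝒱, ∑ i, Pusv p U V S i z.1 z.2.2 z.2.1 * d z.1 z.2.2 :=
        (Finset.mul_sum _ _ _).symm
    _ = (K:ℝ)⁻¹ * ∑ i, ∑ z : 𝒰 × 𝒮 × 𝒱, Pusv p U V S i z.1 z.2.2 z.2.1 * d z.1 z.2.2 := by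
        rw [Finset.sum_comm]
    _ = (K:ℝ)⁻¹ * ∑ i : Fin K, ∑ ω, p ω * d (U i ω) (V i ω) := by
        rw [Finset.sum_congr rfl fun i _ => key i]
    _ = (K:ℝ)⁻¹ * ∑ ω, p ω * ∑ i, d (U i ω) (V i ω) := by
        rw [Finset.sum_comm]
        congr 1
        exact Finset.sum_congr rfl fun ω _ => (Finset.mul_sum _ _ _).symm


theorem pr_trip_J {A B C : Type*} [Fintype A] [Fintype B] [Fintype C]
    [DecidableEq A] [DecidableEq B] [DecidableEq C] (P : A × B × C → ℝ) (a : A) (b : B) (c : C) :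
    pr P (fun w => w.1 = a ∧ w.2.2 = c ∧ w.2.1 = b) = P (a, b, c) := by
  unfold pr
  rw [Finset.sum_congr rfl (fun w _ => if_congr (show (w.1 = a ∧ w.2.2 = c ∧ w.2.1 = b)
    ↔ w = (a, b, c) by obtain ⟨w1, w2, w3⟩ := w; simp [Prod.ext_iff]; tauto) rfl rfl)]
  rw [Finset.sum_ite_eq' univ (a, b, c) P]
  simp

theorem pr_trip_Z {A B C : Type*} [Fintype A] [Fintype B] [Fintype C]
    [DecidableEq B] (P : A × B × C → ℝ) (b : B) :
    pr P (fun w => w.2.1 = b) = ∑ a, ∑ c, P (a, b, c) := by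
  unfold pr
  rw [sum_triple (fun w => if w.2.1 = b then P w else 0)]
  apply Finset.sum_congr rfl; intro a _
  rw [Finset.sum_comm]
  apply Finset.sum_congr rfl; intro c _
  rw [Finset.sum_ite_eq' univ b (fun b' => P (a, b', c))]
  simp

theorem pr_trip_XZ {A B C : Type*} [Fintype A] [Fintype B] [Fintype C]
    [DecidableEq A] [DecidableEq B] (P : A × B × C → ℝ) (a : A) (b : B) :
    pr P (fun w => w.1 = a ∧ w.2.1 = b) = ∑ c, P (a, b, c) := by
  unfold pr
  rw [sum_triple (fun w => if w.1 = a ∧ w.2.1 = b then P w else 0)]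
  rw [Finset.sum_eq_single a ?ne ?nm]
  case ne =>
    intro a' _ ha'
    exact Finset.sum_eq_zero fun b' _ => Finset.sum_eq_zero fun c _ => by simp [ha']
  case nm => intro h; exact absurd (Finset.mem_univ a) h
  calc ∑ b', ∑ c, (if (a, b', c).1 = a ∧ (a, b', c).2.1 = b then P (a, b', c) else 0)
      = ∑ b', (if b' = b then ∑ c, P (a, b', c) else 0) := by
        apply Finset.sum_congr rfl; intro b' _
        by_cases hb : b' = b <;> simp [hb]
    _ = ∑ c, P (a, b, c) := by
        rw [Finset.sum_ite_eq' univ b (fun b' => ∑ c, P (a, b', c))]; simp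

theorem pr_trip_YZ {A B C : Type*} [Fintype A] [Fintype B] [Fintype C]
    [DecidableEq B] [DecidableEq C] (P : A × B × C → ℝ) (b : B) (c : C) :
    pr P (fun w => w.2.2 = c ∧ w.2.1 = b) = ∑ a, P (a, b, c) := by
  unfold pr
  rw [sum_triple (fun w => if w.2.2 = c ∧ w.2.1 = b then P w else 0)]
  apply Finset.sum_congr rfl; intro a _
  calc ∑ b', ∑ c', (if (a, b', c').2.2 = c ∧ (a, b', c').2.1 = b then P (a, b', c') else 0)
      = ∑ b', (if b' = b then P (a, b', c) else 0) := by
        apply Finset.sum_congr rfl; intro b' _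
        by_cases hb : b' = b
        · simp only [hb, and_true]
          rw [Finset.sum_ite_eq' univ c (fun c' => P (a, b, c'))]
          simp [hb]
        · simp [hb]
    _ = P (a, b, c) := by
        rw [Finset.sum_ite_eq' univ b (fun b' => P (a, b', c))]; simp

variable {Ω 𝒰 𝒮 𝒱 𝒳 𝒴 : Type*} [Fintype Ω] [Fintype 𝒰] [Fintype 𝒮] [Fintype 𝒱]
    [Fintype 𝒳] [Fintype 𝒴]
    [DecidableEq 𝒰] [DecidableEq 𝒮] [DecidableEq 𝒱] [DecidableEq 𝒳] [DecidableEq 𝒴]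
    {K N : ℕ}
    (p : Ω → ℝ)
    (U : Fin K → Ω → 𝒰) (S : Fin K → Ω → 𝒮) (V : Fin K → Ω → 𝒱)
    (X : Fin N → Ω → 𝒳) (Y : Fin N → Ω → 𝒴)
    (q : 𝒰 × 𝒮 → ℝ)

theorem pib_margUV (hK : 0 < K) (hq1 : ∑ w, q w = 1)
    (hiid : ∀ w : Fin K → 𝒰 × 𝒮,
      pr p (fun ω => ∀ i : Fin K, (U i ω, S i ω) = w i) = ∏ i : Fin K, q (w i)) :
    ∀ s, ∑ a, ∑ c, pib p U V S a s c = qS q s := by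
  intro s
  rw [Finset.sum_congr rfl fun a _ => pib_margU p U S V q hK hq1 hiid a s]
  rfl

theorem condMI_P_form (hp : ∀ ω, 0 ≤ p ω) (hK : 0 < K) (hq1 : ∑ w, q w = 1)
    (hiid : ∀ w : Fin K → 𝒰 × 𝒮,
      pr p (fun ω => ∀ i : Fin K, (U i ω, S i ω) = w i) = ∏ i : Fin K, q (w i)) :
    condMI (fun w : 𝒰 × 𝒮 × 𝒱 => q (w.1, w.2.1) * tt p U V S q w.1 w.2.1 w.2.2)
      (fun w => w.1) (fun w => w.2.2) (fun w => w.2.1)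
    = ∑ z : 𝒰 × 𝒱 × 𝒮, pib p U V S z.1 z.2.2 z.2.1 * Real.logb 2
        ((pib p U V S z.1 z.2.2 z.2.1 * qS q z.2.2) /
          (q (z.1, z.2.2) * mb p V S z.2.1 z.2.2)) := by
  have hP' : (fun w : 𝒰 × 𝒮 × 𝒱 => q (w.1, w.2.1) * tt p U V S q w.1 w.2.1 w.2.2)
      = fun w => pib p U V S w.1 w.2.1 w.2.2 :=
    funext fun w => qt_eq p U S V q hp hq1 hiid w.1 w.2.1 w.2.2
  rw [hP']
  rw [sum_triple' (fun u v s => pib p U V S u s v * Real.logb 2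
    ((pib p U V S u s v * qS q s) / (q (u, s) * mb p V S v s)))]
  unfold condMI
  simp only [pr_trip_J, pr_trip_XZ, pr_trip_YZ, pr_trip_Z]
  simp only [pib_margU p U S V q hK hq1 hiid, pib_margV p U S V,
    pib_margUV p U S V q hK hq1 hiid]
  unfold qS
  rfl

theorem stepB (hp : ∀ ω, 0 ≤ p ω) (hq : ∀ w, 0 ≤ q w) (hK : 0 < K)
    (hq1 : ∑ w, q w = 1)
    (hiid : ∀ w : Fin K → 𝒰 × 𝒮,
      pr p (fun ω => ∀ i : Fin K, (U i ω, S i ω) = w i) = ∏ i : Fin K, q (w i)) :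
    (K:ℝ) * (∑ z : 𝒰 × 𝒱 × 𝒮, pib p U V S z.1 z.2.2 z.2.1 * Real.logb 2
        ((pib p U V S z.1 z.2.2 z.2.1 * qS q z.2.2) /
          (q (z.1, z.2.2) * mb p V S z.2.1 z.2.2)))
      ≤ ∑ i, condMI p (U i) (V i) (S i) := by
  have hKne : (K:ℝ) ≠ 0 := Nat.cast_ne_zero.mpr hK.ne'
  rw [Finset.sum_congr rfl fun i _ => condMI_form p U S V q hq1 hiid i]
  rw [Finset.sum_comm, Finset.mul_sum]
  apply Finset.sum_le_sum
  rintro ⟨u, v, s⟩ _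
  simp only
  set a : Fin K → ℝ := fun k => (K:ℝ)⁻¹ * Pusv p U V S k u v s with ha
  set b : Fin K → ℝ := fun k => (K:ℝ)⁻¹ * (q (u, s) * Pvs p V S k v s / qS q s) with hb
  have hanneg : ∀ k, 0 ≤ a k := fun k => mul_nonneg (by positivity) (pr_nonneg p hp _)
  have hbnneg : ∀ k, 0 ≤ b k := fun k => mul_nonneg (by positivity)
    (div_nonneg (mul_nonneg (hq _) (pr_nonneg p hp _)) (qS_nonneg q hq s))
  have hab : ∀ k, b k = 0 → a k = 0 := by
    intro k h
    rw [hb] at h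
    have h2 : q (u, s) * Pvs p V S k v s / qS q s = 0 := by
      rcases mul_eq_zero.mp h with h' | h'
      · exact absurd h' (inv_ne_zero hKne)
      · exact h'
    have hP0 : Pusv p U V S k u v s = 0 := by
      rcases div_eq_zero_iff.mp h2 with h3 | h3
      · rcases mul_eq_zero.mp h3 with h4 | h4
        · refine le_antisymm ?_ (pr_nonneg p hp _)
          rw [← h4]
          exact Pusv_le_q p U S V q hp hq1 hiid k u v s
        · refine le_antisymm ?_ (pr_nonneg p hp _)
          rw [← h4]
          exact Pusv_le_Pvs p U S V hp k u v s
      · have hq0 : q (u, s) = 0 :=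
          le_antisymm (h3 ▸ q_le_qS q hq u s) (hq (u, s))
        refine le_antisymm ?_ (pr_nonneg p hp _)
        rw [← hq0]
        exact Pusv_le_q p U S V q hp hq1 hiid k u v s
    rw [ha]
    simp [hP0]
  have hsa : ∑ k, a k = pib p U V S u s v := by
    rw [ha, ← Finset.mul_sum]
    rfl
  have hsb : ∑ k, b k = q (u, s) * mb p V S v s / qS q s := by
    rw [hb, ← Finset.mul_sum, ← Finset.sum_div, ← Finset.mul_sum]
    unfold mb
    ring
  have L := logsum a b hanneg hbnneg hab
  rw [hsa, hsb] at L
  rw [div_div_eq_mul_div] at L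
  have L2 := mul_le_mul_of_nonneg_left L (le_of_lt (by positivity : (0:ℝ) < (K:ℝ)))
  refine le_trans L2 ?_
  rw [Finset.mul_sum]
  apply le_of_eq
  apply Finset.sum_congr rfl
  intro k _
  rw [ha, hb]
  simp only
  rw [mul_div_mul_left _ _ (inv_ne_zero hKne)]
  rw [div_div_eq_mul_div]
  rw [← mul_assoc, ← mul_assoc, mul_inv_cancel₀ hKne, one_mul]

variable {Ω 𝒰 𝒮 𝒱 𝒳 𝒴 : Type*} [Fintype Ω] [Fintype 𝒰] [Fintype 𝒮] [Fintype 𝒱]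
    [Fintype 𝒳] [Fintype 𝒴]
    [DecidableEq 𝒰] [DecidableEq 𝒮] [DecidableEq 𝒱] [DecidableEq 𝒳] [DecidableEq 𝒴]
    {K N : ℕ}
    (p : Ω → ℝ)
    (U : Fin K → Ω → 𝒰) (S : Fin K → Ω → 𝒮) (V : Fin K → Ω → 𝒱)
    (X : Fin N → Ω → 𝒳) (Y : Fin N → Ω → 𝒴)
    (q : 𝒰 × 𝒮 → ℝ)

theorem PA_le_Pusv (hp : ∀ ω, 0 ≤ p ω)
    (g : (Fin N → 𝒴) → (Fin K → 𝒮) → Fin K → 𝒱)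
    (hg : ∀ ω i, V i ω = g (fun j => Y j ω) (fun j => S j ω) i)
    (w : (Fin K → 𝒰) × (Fin K → 𝒮) × (Fin N → 𝒴)) (i : Fin K) :
    PA p U S Y w ≤ Pusv p U V S i (w.1 i) (g w.2.2 w.2.1 i) (w.2.1 i) := by
  apply pr_mono p hp
  intro ω hA
  refine ⟨(hA.1 i).1, ?_, (hA.1 i).2⟩
  rw [hg ω i]
  congr 1
  · exact funext hA.2
  · exact funext (fun k => (hA.1 k).2)

theorem PA_le_Pxy (hp : ∀ ω, 0 ≤ p ω)
    (f : (Fin K → 𝒰) → (Fin K → 𝒮) → Fin N → 𝒳)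
    (hf : ∀ ω i, X i ω = f (fun j => U j ω) (fun j => S j ω) i)
    (w : (Fin K → 𝒰) × (Fin K → 𝒮) × (Fin N → 𝒴)) (j : Fin N) :
    PA p U S Y w ≤ Pxy p X Y j (f w.1 w.2.1 j) (w.2.2 j) := by
  apply pr_mono p hp
  intro ω hA
  constructor
  · rw [hf ω j]
    congr 1
    · exact funext (fun k => (hA.1 k).1)
    · exact funext (fun k => (hA.1 k).2)
  · exact hA.2 j

theorem Pxy_le_Px (hp : ∀ ω, 0 ≤ p ω) (j : Fin N) (x : 𝒳) (y : 𝒴) :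
    Pxy p X Y j x y ≤ Px p X j x := pr_mono p hp (fun ω h => h.1)

theorem Pxy_le_Py (hp : ∀ ω, 0 ≤ p ω) (j : Fin N) (x : 𝒳) (y : 𝒴) :
    Pxy p X Y j x y ≤ Py p Y j y := pr_mono p hp (fun ω h => h.2)

theorem star (hp : ∀ ω, 0 ≤ p ω) (hp1 : ∑ ω, p ω = 1)
    (hq : ∀ w, 0 ≤ q w) (hq1 : ∑ w, q w = 1)
    (hiid : ∀ w : Fin K → 𝒰 × 𝒮,
      pr p (fun ω => ∀ i : Fin K, (U i ω, S i ω) = w i) = ∏ i : Fin K, q (w i))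
    (W : 𝒳 → 𝒴 → ℝ) (hW : ∀ x y, 0 ≤ W x y) (hW1 : ∀ x, ∑ y, W x y = 1)
    (f : (Fin K → 𝒰) → (Fin K → 𝒮) → Fin N → 𝒳)
    (hf : ∀ ω i, X i ω = f (fun j => U j ω) (fun j => S j ω) i)
    (hch : ∀ (us : Fin K → 𝒰) (ss : Fin K → 𝒮) (ys : Fin N → 𝒴),
      pr p (fun ω => (∀ i : Fin K, U i ω = us i ∧ S i ω = ss i) ∧
          (∀ j : Fin N, Y j ω = ys j)) =
        pr p (fun ω => ∀ i : Fin K, U i ω = us i ∧ S i ω = ss i) *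
          ∏ j : Fin N, W (f us ss j) (ys j))
    (g : (Fin N → 𝒴) → (Fin K → 𝒮) → Fin K → 𝒱)
    (hg : ∀ ω i, V i ω = g (fun j => Y j ω) (fun j => S j ω) i) :
    ∑ i, condMI p (U i) (V i) (S i) ≤ ∑ j, mi p (X j) (Y j) := by
  classical
  set Li : Fin K → 𝒰 → 𝒱 → 𝒮 → ℝ := fun i u v s =>
    Real.logb 2 ((Pusv p U V S i u v s * qS q s) / (q (u, s) * Pvs p V S i v s)) with hLi
  set Mj : Fin N → 𝒳 → 𝒴 → ℝ := fun j x y =>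
    Real.logb 2 (Pxy p X Y j x y / (Px p X j x * Py p Y j y)) with hMj
  set b : (Fin K → 𝒰) × (Fin K → 𝒮) × (Fin N → 𝒴) → ℝ := fun w =>
    (∏ i, Pusv p U V S i (w.1 i) (g w.2.2 w.2.1 i) (w.2.1 i) * qS q (w.2.1 i) /
      Pvs p V S i (g w.2.2 w.2.1 i) (w.2.1 i)) * ∏ j, Py p Y j (w.2.2 j) with hbdef
  -- grouping over atoms : left side
  have key1 : ∑ i, condMI p (U i) (V i) (S i)
      = ∑ w : (Fin K → 𝒰) × (Fin K → 𝒮) × (Fin N → 𝒴),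
        PA p U S Y w * ∑ i, Li i (w.1 i) (g w.2.2 w.2.1 i) (w.2.1 i) := by
    rw [Finset.sum_congr rfl fun i _ => condMI_form p U S V q hq1 hiid i]
    have e1 : ∀ i : Fin K, (∑ z : 𝒰 × 𝒱 × 𝒮,
        Pusv p U V S i z.1 z.2.1 z.2.2 * Li i z.1 z.2.1 z.2.2)
        = ∑ w : (Fin K → 𝒰) × (Fin K → 𝒮) × (Fin N → 𝒴),
          PA p U S Y w * Li i (w.1 i) (g w.2.2 w.2.1 i) (w.2.1 i) := by
      intro i
      calc ∑ z : 𝒰 × 𝒱 × 𝒮, Pusv p U V S i z.1 z.2.1 z.2.2 * Li i z.1 z.2.1 z.2.2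
          = ∑ z : 𝒰 × 𝒱 × 𝒮, ∑ w : (Fin K → 𝒰) × (Fin K → 𝒮) × (Fin N → 𝒴),
            (if (w.1 i, g w.2.2 w.2.1 i, w.2.1 i) = z
              then PA p U S Y w * Li i z.1 z.2.1 z.2.2 else 0) := by
            apply Finset.sum_congr rfl; intro z _
            rw [Pusv_rep p U S V Y g hg i z, Finset.sum_mul]
            apply Finset.sum_congr rfl; intro w _
            rw [ite_mul, zero_mul]
        _ = ∑ w : (Fin K → 𝒰) × (Fin K → 𝒮) × (Fin N → 𝒴), ∑ z : 𝒰 × 𝒱 × 𝒮,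
            (if (w.1 i, g w.2.2 w.2.1 i, w.2.1 i) = z
              then PA p U S Y w * Li i z.1 z.2.1 z.2.2 else 0) := Finset.sum_comm
        _ = ∑ w : (Fin K → 𝒰) × (Fin K → 𝒮) × (Fin N → 𝒴),
            PA p U S Y w * Li i (w.1 i) (g w.2.2 w.2.1 i) (w.2.1 i) := by
            apply Finset.sum_congr rfl; intro w _
            rw [Finset.sum_ite_eq univ (w.1 i, g w.2.2 w.2.1 i, w.2.1 i)
              (fun z => PA p U S Y w * Li i z.1 z.2.1 z.2.2)]
            simp
    rw [Finset.sum_congr rfl fun i _ => e1 i, Finset.sum_comm]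
    apply Finset.sum_congr rfl; intro w _
    rw [Finset.mul_sum]
  -- grouping over atoms : right side
  have key2 : ∑ j, mi p (X j) (Y j)
      = ∑ w : (Fin K → 𝒰) × (Fin K → 𝒮) × (Fin N → 𝒴),
        PA p U S Y w * ∑ j, Mj j (f w.1 w.2.1 j) (w.2.2 j) := by
    rw [Finset.sum_congr rfl fun j _ => mi_form p X Y hp1 j]
    have e1 : ∀ j : Fin N, (∑ z : 𝒳 × 𝒴, Pxy p X Y j z.1 z.2 * Mj j z.1 z.2)
        = ∑ w : (Fin K → 𝒰) × (Fin K → 𝒮) × (Fin N → 𝒴),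
          PA p U S Y w * Mj j (f w.1 w.2.1 j) (w.2.2 j) := by
      intro j
      calc ∑ z : 𝒳 × 𝒴, Pxy p X Y j z.1 z.2 * Mj j z.1 z.2
          = ∑ z : 𝒳 × 𝒴, ∑ w : (Fin K → 𝒰) × (Fin K → 𝒮) × (Fin N → 𝒴),
            (if (f w.1 w.2.1 j, w.2.2 j) = z then PA p U S Y w * Mj j z.1 z.2 else 0) := by
            apply Finset.sum_congr rfl; intro z _
            rw [Pxy_rep p U S X Y f hf j z, Finset.sum_mul]
            apply Finset.sum_congr rfl; intro w _
            rw [ite_mul, zero_mul]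
        _ = ∑ w : (Fin K → 𝒰) × (Fin K → 𝒮) × (Fin N → 𝒴), ∑ z : 𝒳 × 𝒴,
            (if (f w.1 w.2.1 j, w.2.2 j) = z then PA p U S Y w * Mj j z.1 z.2 else 0) :=
            Finset.sum_comm
        _ = ∑ w : (Fin K → 𝒰) × (Fin K → 𝒮) × (Fin N → 𝒴),
            PA p U S Y w * Mj j (f w.1 w.2.1 j) (w.2.2 j) := by
            apply Finset.sum_congr rfl; intro w _
            rw [Finset.sum_ite_eq univ (f w.1 w.2.1 j, w.2.2 j)
              (fun z => PA p U S Y w * Mj j z.1 z.2)]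
            simp
    rw [Finset.sum_congr rfl fun j _ => e1 j, Finset.sum_comm]
    apply Finset.sum_congr rfl; intro w _
    rw [Finset.mul_sum]
  -- positivity facts on the support of PA
  have hPAf := PA_form p U S Y q W f hiid hch
  have hqpos : ∀ w, PA p U S Y w ≠ 0 → ∀ i : Fin K, 0 < q (w.1 i, w.2.1 i) := by
    intro w hw i
    rw [hPAf w] at hw
    have h1 : (∏ i, q (w.1 i, w.2.1 i)) ≠ 0 := left_ne_zero_of_mul hw
    have h2 := Finset.prod_ne_zero_iff.mp h1 i (Finset.mem_univ i)
    exact lt_of_le_of_ne (hq _) (Ne.symm h2)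
  have hWpos : ∀ w, PA p U S Y w ≠ 0 → ∀ j : Fin N, 0 < W (f w.1 w.2.1 j) (w.2.2 j) := by
    intro w hw j
    rw [hPAf w] at hw
    have h1 : (∏ j, W (f w.1 w.2.1 j) (w.2.2 j)) ≠ 0 := right_ne_zero_of_mul hw
    have h2 := Finset.prod_ne_zero_iff.mp h1 j (Finset.mem_univ j)
    exact lt_of_le_of_ne (hW _ _) (Ne.symm h2)
  have hPApos : ∀ w, PA p U S Y w ≠ 0 → 0 < PA p U S Y w :=
    fun w hw => lt_of_le_of_ne (pr_nonneg p hp _) (Ne.symm hw)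
  have hPusvpos : ∀ w, PA p U S Y w ≠ 0 → ∀ i : Fin K,
      0 < Pusv p U V S i (w.1 i) (g w.2.2 w.2.1 i) (w.2.1 i) :=
    fun w hw i => lt_of_lt_of_le (hPApos w hw) (PA_le_Pusv p U S V Y hp g hg w i)
  have hPvspos : ∀ w, PA p U S Y w ≠ 0 → ∀ i : Fin K,
      0 < Pvs p V S i (g w.2.2 w.2.1 i) (w.2.1 i) :=
    fun w hw i => lt_of_lt_of_le (hPusvpos w hw i)
      (Pusv_le_Pvs p U S V hp i (w.1 i) (g w.2.2 w.2.1 i) (w.2.1 i))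
  have hqSpos : ∀ w, PA p U S Y w ≠ 0 → ∀ i : Fin K, 0 < qS q (w.2.1 i) :=
    fun w hw i => lt_of_lt_of_le (hqpos w hw i) (q_le_qS q hq (w.1 i) (w.2.1 i))
  have hPxypos : ∀ w, PA p U S Y w ≠ 0 → ∀ j : Fin N,
      0 < Pxy p X Y j (f w.1 w.2.1 j) (w.2.2 j) :=
    fun w hw j => lt_of_lt_of_le (hPApos w hw) (PA_le_Pxy p U S X Y hp f hf w j)
  have hPxpos : ∀ w, PA p U S Y w ≠ 0 → ∀ j : Fin N, 0 < Px p X j (f w.1 w.2.1 j) :=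
    fun w hw j => lt_of_lt_of_le (hPxypos w hw j) (Pxy_le_Px p X Y hp j _ _)
  have hPypos : ∀ w, PA p U S Y w ≠ 0 → ∀ j : Fin N, 0 < Py p Y j (w.2.2 j) :=
    fun w hw j => lt_of_lt_of_le (hPxypos w hw j) (Pxy_le_Py p X Y hp j _ _)
  have hbpos : ∀ w, PA p U S Y w ≠ 0 → 0 < b w := by
    intro w hw
    rw [hbdef]
    apply mul_pos
    · apply Finset.prod_pos
      intro i _
      exact div_pos (mul_pos (hPusvpos w hw i) (hqSpos w hw i)) (hPvspos w hw i)
    · exact Finset.prod_pos fun j _ => hPypos w hw j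
  have hbnneg : ∀ w, 0 ≤ b w := by
    intro w
    rw [hbdef]
    apply mul_nonneg
    · apply Finset.prod_nonneg
      intro i _
      exact div_nonneg (mul_nonneg (pr_nonneg p hp _) (qS_nonneg q hq _)) (pr_nonneg p hp _)
    · exact Finset.prod_nonneg fun j _ => pr_nonneg p hp _
  -- the pointwise logarithmic identity
  have hpoint : ∀ w, PA p U S Y w * (∑ j, Mj j (f w.1 w.2.1 j) (w.2.2 j))
      - PA p U S Y w * (∑ i, Li i (w.1 i) (g w.2.2 w.2.1 i) (w.2.1 i))
      = PA p U S Y w * Real.logb 2 (PA p U S Y w / b w) := by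
    intro w
    by_cases hw : PA p U S Y w = 0
    · simp [hw]
    · rw [← mul_sub]
      congr 1
      have eB : ∀ j : Fin N, Mj j (f w.1 w.2.1 j) (w.2.2 j)
          = Real.logb 2 (W (f w.1 w.2.1 j) (w.2.2 j)) - Real.logb 2 (Py p Y j (w.2.2 j)) := by
        intro j
        rw [hMj]
        simp only
        rw [Pxy_eq p U S X Y q W hW1 f hf hiid hch j _ _]
        rw [Real.logb_div (mul_ne_zero (ne_of_gt (hPxpos w hw j)) (ne_of_gt (hWpos w hw j)))
          (mul_ne_zero (ne_of_gt (hPxpos w hw j)) (ne_of_gt (hPypos w hw j)))]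
        rw [Real.logb_mul (ne_of_gt (hPxpos w hw j)) (ne_of_gt (hWpos w hw j))]
        rw [Real.logb_mul (ne_of_gt (hPxpos w hw j)) (ne_of_gt (hPypos w hw j))]
        ring
      have eA : ∀ i : Fin K, Li i (w.1 i) (g w.2.2 w.2.1 i) (w.2.1 i)
          = Real.logb 2 (Pusv p U V S i (w.1 i) (g w.2.2 w.2.1 i) (w.2.1 i))
            + Real.logb 2 (qS q (w.2.1 i)) - Real.logb 2 (q (w.1 i, w.2.1 i))
            - Real.logb 2 (Pvs p V S i (g w.2.2 w.2.1 i) (w.2.1 i)) := by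
        intro i
        rw [hLi]
        simp only
        rw [Real.logb_div
          (mul_ne_zero (ne_of_gt (hPusvpos w hw i)) (ne_of_gt (hqSpos w hw i)))
          (mul_ne_zero (ne_of_gt (hqpos w hw i)) (ne_of_gt (hPvspos w hw i)))]
        rw [Real.logb_mul (ne_of_gt (hPusvpos w hw i)) (ne_of_gt (hqSpos w hw i))]
        rw [Real.logb_mul (ne_of_gt (hqpos w hw i)) (ne_of_gt (hPvspos w hw i))]
        ring
      have ePA : Real.logb 2 (PA p U S Y w)
          = (∑ i, Real.logb 2 (q (w.1 i, w.2.1 i)))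
            + ∑ j, Real.logb 2 (W (f w.1 w.2.1 j) (w.2.2 j)) := by
        rw [hPAf w]
        rw [Real.logb_mul (Finset.prod_ne_zero_iff.mpr fun i _ => ne_of_gt (hqpos w hw i))
          (Finset.prod_ne_zero_iff.mpr fun j _ => ne_of_gt (hWpos w hw j))]
        rw [Real.logb_prod _ _ fun i _ => ne_of_gt (hqpos w hw i),
          Real.logb_prod _ _ fun j _ => ne_of_gt (hWpos w hw j)]
      have eb : Real.logb 2 (b w)
          = (∑ i, (Real.logb 2 (Pusv p U V S i (w.1 i) (g w.2.2 w.2.1 i) (w.2.1 i))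
              + Real.logb 2 (qS q (w.2.1 i))
              - Real.logb 2 (Pvs p V S i (g w.2.2 w.2.1 i) (w.2.1 i))))
            + ∑ j, Real.logb 2 (Py p Y j (w.2.2 j)) := by
        rw [hbdef]
        simp only
        rw [Real.logb_mul
          (Finset.prod_ne_zero_iff.mpr fun i _ => ne_of_gt
            (div_pos (mul_pos (hPusvpos w hw i) (hqSpos w hw i)) (hPvspos w hw i)))
          (Finset.prod_ne_zero_iff.mpr fun j _ => ne_of_gt (hPypos w hw j))]
        rw [Real.logb_prod _ _ fun i _ => ne_of_gt
          (div_pos (mul_pos (hPusvpos w hw i) (hqSpos w hw i)) (hPvspos w hw i))]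
        rw [Real.logb_prod _ _ fun j _ => ne_of_gt (hPypos w hw j)]
        congr 1
        apply Finset.sum_congr rfl
        intro i _
        rw [Real.logb_div
          (mul_ne_zero (ne_of_gt (hPusvpos w hw i)) (ne_of_gt (hqSpos w hw i)))
          (ne_of_gt (hPvspos w hw i))]
        rw [Real.logb_mul (ne_of_gt (hPusvpos w hw i)) (ne_of_gt (hqSpos w hw i))]
      rw [Real.logb_div hw (ne_of_gt (hbpos w hw))]
      rw [Finset.sum_congr rfl fun j _ => eB j, Finset.sum_congr rfl fun i _ => eA i,
        ePA, eb]
      simp only [Finset.sum_sub_distrib, Finset.sum_add_distrib]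
      ring
  -- sum of b is at most one
  have hsumb : ∑ w : (Fin K → 𝒰) × (Fin K → 𝒮) × (Fin N → 𝒴), b w ≤ 1 := by
    have hinner : ∀ (ss : Fin K → 𝒮) (yy : Fin N → 𝒴),
        ∑ uu : Fin K → 𝒰, b (uu, ss, yy)
          ≤ (∏ i, qS q (ss i)) * ∏ j, Py p Y j (yy j) := by
      intro ss yy
      have e1 : ∑ uu : Fin K → 𝒰, b (uu, ss, yy)
          = (∑ uu : Fin K → 𝒰, ∏ i, (Pusv p U V S i (uu i) (g yy ss i) (ss i) * qS q (ss i) /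
              Pvs p V S i (g yy ss i) (ss i))) * ∏ j, Py p Y j (yy j) := by
        rw [Finset.sum_mul]
      rw [e1]
      apply mul_le_mul_of_nonneg_right _ (Finset.prod_nonneg fun j _ => pr_nonneg p hp _)
      rw [sum_fn_prod (fun i u => Pusv p U V S i u (g yy ss i) (ss i) * qS q (ss i) /
        Pvs p V S i (g yy ss i) (ss i))]
      apply Finset.prod_le_prod
      · intro i _
        exact Finset.sum_nonneg fun u _ =>
          div_nonneg (mul_nonneg (pr_nonneg p hp _) (qS_nonneg q hq _)) (pr_nonneg p hp _)
      · intro i _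
        rw [← Finset.sum_div, ← Finset.sum_mul, marg_m2 p U S V i (g yy ss i) (ss i)]
        by_cases hz : Pvs p V S i (g yy ss i) (ss i) = 0
        · rw [hz]
          simp [qS_nonneg q hq (ss i)]
        · exact le_of_eq (mul_div_cancel_left₀ _ hz)
    calc ∑ w : (Fin K → 𝒰) × (Fin K → 𝒮) × (Fin N → 𝒴), b w
        = ∑ uu : Fin K → 𝒰, ∑ ss : Fin K → 𝒮, ∑ yy : Fin N → 𝒴, b (uu, ss, yy) :=
          sum_triple b
      _ = ∑ ss : Fin K → 𝒮, ∑ yy : Fin N → 𝒴, ∑ uu : Fin K → 𝒰, b (uu, ss, yy) := by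
          rw [Finset.sum_comm]
          apply Finset.sum_congr rfl; intro ss _
          rw [Finset.sum_comm]
      _ ≤ ∑ ss : Fin K → 𝒮, ∑ yy : Fin N → 𝒴, (∏ i, qS q (ss i)) * ∏ j, Py p Y j (yy j) := by
          apply Finset.sum_le_sum; intro ss _
          apply Finset.sum_le_sum; intro yy _
          exact hinner ss yy
      _ = (∑ ss : Fin K → 𝒮, ∏ i, qS q (ss i)) *
          (∑ yy : Fin N → 𝒴, ∏ j, Py p Y j (yy j)) := by
          rw [Finset.sum_mul]
          apply Finset.sum_congr rfl; intro ss _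
          rw [Finset.mul_sum]
      _ = 1 := by
          have hPy1 : ∀ j : Fin N, ∑ y, Py p Y j y = 1 := fun j => pr_rv_one p hp1 (Y j)
          rw [sum_fn_prod (fun i s => qS q s), sum_fn_prod (fun j y => Py p Y j y)]
          rw [Finset.prod_congr rfl fun i _ => qS_one q hq1,
            Finset.prod_congr rfl fun j _ => hPy1 j]
          simp
  -- conclude via the Gibbs inequality
  rw [key1, key2, ← sub_nonneg, ← Finset.sum_sub_distrib]
  rw [Finset.sum_congr rfl fun w _ => hpoint w]
  apply gibbs (fun w => PA p U S Y w) b (fun w => pr_nonneg p hp _) hbnneg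
    (fun w hb0 => by
      by_contra hPA
      exact absurd hb0 (ne_of_gt (hbpos w hPA)))
  rw [PA_one p U S Y hp1]
  exact hsumb

theorem pr_pair_J {A B : Type*} [Fintype A] [Fintype B] [DecidableEq A] [DecidableEq B]
    (P : A × B → ℝ) (a : A) (b : B) :
    pr P (fun w => Prod.fst w = a ∧ Prod.snd w = b) = P (a, b) := by
  unfold pr
  rw [Finset.sum_congr rfl (fun w _ => if_congr (show (Prod.fst w = a ∧ Prod.snd w = b)
    ↔ w = (a, b) by obtain ⟨w1, w2⟩ := w; simp [Prod.ext_iff]) rfl rfl)]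
  rw [Finset.sum_ite_eq' univ (a, b) P]
  simp

theorem pr_pair_X {A B : Type*} [Fintype A] [Fintype B] [DecidableEq A]
    (P : A × B → ℝ) (a : A) :
    pr P (fun w => Prod.fst w = a) = ∑ b, P (a, b) := by
  unfold pr
  rw [Fintype.sum_prod_type]
  rw [Finset.sum_eq_single a ?ne ?nm]
  case ne => intro a' _ ha'; exact Finset.sum_eq_zero fun b _ => by simp [ha']
  case nm => intro h; exact absurd (Finset.mem_univ a) h
  simp

theorem pr_pair_Y {A B : Type*} [Fintype A] [Fintype B] [DecidableEq B]
    (P : A × B → ℝ) (b : B) :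
    pr P (fun w => Prod.snd w = b) = ∑ a, P (a, b) := by
  unfold pr
  rw [Fintype.sum_prod_type]
  apply Finset.sum_congr rfl; intro a _
  rw [Finset.sum_ite_eq' univ b (fun b' => P (a, b'))]
  simp

variable {Ω 𝒰 𝒮 𝒱 𝒳 𝒴 : Type*} [Fintype Ω] [Fintype 𝒰] [Fintype 𝒮] [Fintype 𝒱]
    [Fintype 𝒳] [Fintype 𝒴]
    [DecidableEq 𝒰] [DecidableEq 𝒮] [DecidableEq 𝒱] [DecidableEq 𝒳] [DecidableEq 𝒴]
    {K N : ℕ}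
    (p : Ω → ℝ)
    (U : Fin K → Ω → 𝒰) (S : Fin K → Ω → 𝒮) (V : Fin K → Ω → 𝒱)
    (X : Fin N → Ω → 𝒳) (Y : Fin N → Ω → 𝒴)
    (q : 𝒰 × 𝒮 → ℝ)

theorem cap_eq (hp : ∀ ω, 0 ≤ p ω) (hp1 : ∑ ω, p ω = 1)
    (W : 𝒳 → 𝒴 → ℝ) (hW1 : ∀ x, ∑ y, W x y = 1)
    (f : (Fin K → 𝒰) → (Fin K → 𝒮) → Fin N → 𝒳)
    (hf : ∀ ω i, X i ω = f (fun j => U j ω) (fun j => S j ω) i)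
    (hiid : ∀ w : Fin K → 𝒰 × 𝒮,
      pr p (fun ω => ∀ i : Fin K, (U i ω, S i ω) = w i) = ∏ i : Fin K, q (w i))
    (hch : ∀ (us : Fin K → 𝒰) (ss : Fin K → 𝒮) (ys : Fin N → 𝒴),
      pr p (fun ω => (∀ i : Fin K, U i ω = us i ∧ S i ω = ss i) ∧
          (∀ j : Fin N, Y j ω = ys j)) =
        pr p (fun ω => ∀ i : Fin K, U i ω = us i ∧ S i ω = ss i) *
          ∏ j : Fin N, W (f us ss j) (ys j)) (j : Fin N) :
    mi p (X j) (Y j) = mi (fun w : 𝒳 × 𝒴 => Px p X j w.1 * W w.1 w.2) Prod.fst Prod.snd := by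
  have hPx1 : ∑ x, Px p X j x = 1 := pr_rv_one p hp1 (X j)
  have ePxy : ∀ x y, pr p (fun ω => X j ω = x ∧ Y j ω = y) = Px p X j x * W x y :=
    fun x y => Pxy_eq p U S X Y q W hW1 f hf hiid hch j x y
  have ePy : ∀ y, pr p (fun ω => Y j ω = y) = ∑ x, Px p X j x * W x y := by
    intro y
    have h1 : Py p Y j y = ∑ x, Pxy p X Y j x y := marg_Py p X Y j y
    have h2 : ∀ x, Pxy p X Y j x y = Px p X j x * W x y := fun x => ePxy x y
    calc pr p (fun ω => Y j ω = y) = ∑ x, Pxy p X Y j x y := h1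
      _ = ∑ x, Px p X j x * W x y := Finset.sum_congr rfl fun x _ => h2 x
  have etot : ∑ w : 𝒳 × 𝒴, Px p X j w.1 * W w.1 w.2 = 1 := by
    rw [Fintype.sum_prod_type]
    calc ∑ x, ∑ y, Px p X j x * W x y
        = ∑ x, Px p X j x * ∑ y, W x y :=
          Finset.sum_congr rfl fun x _ => (Finset.mul_sum _ _ _).symm
      _ = ∑ x, Px p X j x := by
          rw [Finset.sum_congr rfl fun x (_ : x ∈ univ) => by rw [hW1 x, mul_one]]
      _ = 1 := hPx1
  rw [mi_eq p (X j) (Y j), hp1,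
    mi_eq (fun w : 𝒳 × 𝒴 => Px p X j w.1 * W w.1 w.2) Prod.fst Prod.snd, etot]
  apply Finset.sum_congr rfl; intro x _
  apply Finset.sum_congr rfl; intro y _
  have e1 : pr (fun w : 𝒳 × 𝒴 => Px p X j w.1 * W w.1 w.2)
      (fun w => Prod.fst w = x ∧ Prod.snd w = y) = Px p X j x * W x y :=
    pr_pair_J _ x y
  have e2 : pr (fun w : 𝒳 × 𝒴 => Px p X j w.1 * W w.1 w.2)
      (fun w => Prod.fst w = x) = Px p X j x := by
    rw [pr_pair_X (fun w : 𝒳 × 𝒴 => Px p X j w.1 * W w.1 w.2) x]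
    calc ∑ y, Px p X j x * W x y = Px p X j x * ∑ y, W x y := (Finset.mul_sum _ _ _).symm
      _ = Px p X j x := by rw [hW1 x, mul_one]
  have e3 : pr (fun w : 𝒳 × 𝒴 => Px p X j w.1 * W w.1 w.2)
      (fun w => Prod.snd w = y) = ∑ x', Px p X j x' * W x' y :=
    pr_pair_Y _ y
  rw [e1, e2, e3, ePxy x y, ePy y]
  rfl
end RD

/-- Rate–distortion converse with two-sided side information: a rate-`K/N` joint
source-channel code over a DMC of capacity `C` achieving expected per-symbol distortion
at most `D` for an i.i.d. source `(U_i, S_i)` with side information at encoder and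
decoder satisfies `K · R_SI(D) ≤ N · C`. -/
theorem rate_distortion_converse_side_info
    {Ω 𝒰 𝒮 𝒱 𝒳 𝒴 : Type*} [Fintype Ω] [Fintype 𝒰] [Fintype 𝒮] [Fintype 𝒱]
    [Fintype 𝒳] [Fintype 𝒴]
    [DecidableEq 𝒰] [DecidableEq 𝒮] [DecidableEq 𝒱] [DecidableEq 𝒳] [DecidableEq 𝒴]
    (p : Ω → ℝ) (hp : ∀ ω, 0 ≤ p ω) (hp1 : ∑ ω, p ω = 1)
    (K N : ℕ) (hK : 0 < K) (hN : 0 < N)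
    (U : Fin K → Ω → 𝒰) (S : Fin K → Ω → 𝒮) (V : Fin K → Ω → 𝒱)
    (X : Fin N → Ω → 𝒳) (Y : Fin N → Ω → 𝒴)
    -- i.i.d. source with per-letter joint pmf q
    (q : 𝒰 × 𝒮 → ℝ) (hq : ∀ w, 0 ≤ q w) (hq1 : ∑ w, q w = 1)
    (hiid : ∀ w : Fin K → 𝒰 × 𝒮,
      pr p (fun ω => ∀ i : Fin K, (U i ω, S i ω) = w i) = ∏ i : Fin K, q (w i))
    -- deterministic encoder
    (f : (Fin K → 𝒰) → (Fin K → 𝒮) → Fin N → 𝒳)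
    (hf : ∀ ω i, X i ω = f (fun j => U j ω) (fun j => S j ω) i)
    -- memoryless channel with transition matrix W
    (W : 𝒳 → 𝒴 → ℝ) (hW : ∀ x y, 0 ≤ W x y) (hW1 : ∀ x, ∑ y, W x y = 1)
    (hch : ∀ (us : Fin K → 𝒰) (ss : Fin K → 𝒮) (ys : Fin N → 𝒴),
      pr p (fun ω => (∀ i : Fin K, U i ω = us i ∧ S i ω = ss i) ∧
          (∀ j : Fin N, Y j ω = ys j)) =
        pr p (fun ω => ∀ i : Fin K, U i ω = us i ∧ S i ω = ss i) *
          ∏ j : Fin N, W (f us ss j) (ys j))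
    -- deterministic decoder using the channel output and the side information
    (g : (Fin N → 𝒴) → (Fin K → 𝒮) → Fin K → 𝒱)
    (hg : ∀ ω i, V i ω = g (fun j => Y j ω) (fun j => S j ω) i)
    -- capacity C = max_{p(x)} I(X;Y)
    (C : ℝ)
    (hC : IsGreatest {m : ℝ | ∃ r : 𝒳 → ℝ, (∀ x, 0 ≤ r x) ∧ (∑ x, r x = 1) ∧
      m = mi (fun w : 𝒳 × 𝒴 => r w.1 * W w.1 w.2) Prod.fst Prod.snd} C)
    -- conditional rate-distortion function R_SI(D) = min_{p(v|u,s): E d ≤ D} I(U;V|S)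
    (d : 𝒰 → 𝒱 → ℝ) (D RSI : ℝ)
    (hRSI : IsLeast {m : ℝ | ∃ t : 𝒰 → 𝒮 → 𝒱 → ℝ,
      (∀ u s v, 0 ≤ t u s v) ∧ (∀ u s, ∑ v, t u s v = 1) ∧
      (∑ u : 𝒰, ∑ s : 𝒮, ∑ v : 𝒱, q (u, s) * t u s v * d u v) ≤ D ∧
      m = condMI (fun w : 𝒰 × 𝒮 × 𝒱 => q (w.1, w.2.1) * t w.1 w.2.1 w.2.2)
            (fun w => w.1) (fun w => w.2.2) (fun w => w.2.1)} RSI)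
    -- the code achieves expected per-symbol distortion at most D
    (hD : (1 / (K : ℝ)) * (∑ ω, p ω * ∑ i : Fin K, d (U i ω) (V i ω)) ≤ D) :
    (K : ℝ) * RSI ≤ (N : ℝ) * C := by
  classical
  have hΩne : Nonempty Ω := by
    rcases isEmpty_or_nonempty Ω with h | h
    · rw [Finset.univ_eq_empty, Finset.sum_empty] at hp1; norm_num at hp1
    · exact h
  have hVne : Nonempty 𝒱 := ⟨V ⟨0, hK⟩ (Classical.arbitrary Ω)⟩
  have hKpos : (0:ℝ) < (K:ℝ) := by exact_mod_cast hK
  -- Step A : RSI is bounded by the conditional MI of the averaged test channel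
  have hdist : (∑ u : 𝒰, ∑ s : 𝒮, ∑ v : 𝒱,
      q (u, s) * RD.tt p U V S q u s v * d u v) ≤ D := by
    calc ∑ u : 𝒰, ∑ s : 𝒮, ∑ v : 𝒱, q (u, s) * RD.tt p U V S q u s v * d u v
        = ∑ u : 𝒰, ∑ s : 𝒮, ∑ v : 𝒱, RD.pib p U V S u s v * d u v := by
          apply Finset.sum_congr rfl; intro u _
          apply Finset.sum_congr rfl; intro s _
          apply Finset.sum_congr rfl; intro v _
          rw [RD.qt_eq p U S V q hp hq1 hiid u s v]
      _ = (K:ℝ)⁻¹ * ∑ ω, p ω * ∑ i, d (U i ω) (V i ω) := RD.dist_eq p U S V hK d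
      _ ≤ D := by rw [inv_eq_one_div]; exact hD
  have hmem : condMI (fun w : 𝒰 × 𝒮 × 𝒱 =>
        q (w.1, w.2.1) * RD.tt p U V S q w.1 w.2.1 w.2.2)
      (fun w => w.1) (fun w => w.2.2) (fun w => w.2.1) ∈
      {m : ℝ | ∃ t : 𝒰 → 𝒮 → 𝒱 → ℝ,
        (∀ u s v, 0 ≤ t u s v) ∧ (∀ u s, ∑ v, t u s v = 1) ∧
        (∑ u : 𝒰, ∑ s : 𝒮, ∑ v : 𝒱, q (u, s) * t u s v * d u v) ≤ D ∧
        m = condMI (fun w : 𝒰 × 𝒮 × 𝒱 => q (w.1, w.2.1) * t w.1 w.2.1 w.2.2)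
              (fun w => w.1) (fun w => w.2.2) (fun w => w.2.1)} :=
    ⟨RD.tt p U V S q, RD.tt_nonneg p U S V q hp hq,
      RD.tt_row p U S V q hVne hK hq1 hiid, hdist, rfl⟩
  have hA : RSI ≤ condMI (fun w : 𝒰 × 𝒮 × 𝒱 =>
      q (w.1, w.2.1) * RD.tt p U V S q w.1 w.2.1 w.2.2)
      (fun w => w.1) (fun w => w.2.2) (fun w => w.2.1) := hRSI.2 hmem
  -- Step C : capacity bound for each output letter
  have hCap : ∀ j : Fin N, mi p (X j) (Y j) ≤ C := by
    intro j
    apply hC.2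
    exact ⟨RD.Px p X j, fun x => pr_nonneg p hp _, RD.pr_rv_one p hp1 (X j),
      RD.cap_eq p U S X Y q hp hp1 W hW1 f hf hiid hch j⟩
  -- assemble the chain
  calc (K:ℝ) * RSI
      ≤ (K:ℝ) * condMI (fun w : 𝒰 × 𝒮 × 𝒱 =>
          q (w.1, w.2.1) * RD.tt p U V S q w.1 w.2.1 w.2.2)
        (fun w => w.1) (fun w => w.2.2) (fun w => w.2.1) :=
        mul_le_mul_of_nonneg_left hA hKpos.le
    _ = (K:ℝ) * ∑ z : 𝒰 × 𝒱 × 𝒮, RD.pib p U V S z.1 z.2.2 z.2.1 * Real.logb 2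
          ((RD.pib p U V S z.1 z.2.2 z.2.1 * RD.qS q z.2.2) /
            (q (z.1, z.2.2) * RD.mb p V S z.2.1 z.2.2)) := by
        rw [RD.condMI_P_form p U S V q hp hK hq1 hiid]
    _ ≤ ∑ i, condMI p (U i) (V i) (S i) := RD.stepB p U S V q hp hq hK hq1 hiid
    _ ≤ ∑ j, mi p (X j) (Y j) :=
        RD.star p U S V X Y q hp hp1 hq hq1 hiid W hW hW1 f hf hch g hg
    _ ≤ ∑ _j : Fin N, C := Finset.sum_le_sum fun j _ => hCap j
    _ = (N:ℝ) * C := by simp [Finset.sum_const, mul_comm]
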